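/- Let G be the simple graph on vertex set {v₀, v₁, v₂, v₃, v₄, v₅} with edge set {v₀v₁, v₀v₅, v₁v₂, v₁v₄, v₁v₅, v₂v₃, v₂v₄, v₃v₄, v₄v₅}. Then Bob has a winning strategy in the connected graph coloring game on G with 3 colors. -/

import Mathlib

/-
The graph is the square of the path v₀ v₅ v₁ v₄ v₂ v₃. An uncolored vertex whose neighbors carry
all three colors can never be colored, so Bob has won as soon as such a blocked vertex appears.
Hence the game tree only needs to be searched up to blocked positions, and that search shows
that Bob forces one within the first four moves.
-/

open scoped Classical

namespace ConnGame

variable {V : Type*}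

/-- A move `(v, a)` is proper at the partial coloring `c`: `v` is uncolored and
no neighbor of `v` already has color `a`. -/
def ProperMove (G : SimpleGraph V) {k : ℕ} (c : V → Option (Fin k)) (v : V) (a : Fin k) : Prop :=
  c v = none ∧ ∀ u, G.Adj v u → c u ≠ some a

/-- Connectivity condition on a move: either no vertex is colored yet (first move),
or the chosen vertex has at least one colored neighbor.  This guarantees that the set
of colored vertices induces a connected subgraph after each move. -/
def ConnMove (G : SimpleGraph V) {k : ℕ} (c : V → Option (Fin k)) (v : V) : Prop :=
  (∀ u, c u = none) ∨ ∃ u, G.Adj v u ∧ (c u).isSome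

/-- A legal move in the coloring game (connected version when `conn = true`). -/
def LegalMove (conn : Bool) (G : SimpleGraph V) {k : ℕ}
    (c : V → Option (Fin k)) (v : V) (a : Fin k) : Prop :=
  ProperMove G c v a ∧ (conn = true → ConnMove G c v)

/-- The position obtained by coloring vertex `v` with color `a`. -/
def play [DecidableEq V] {k : ℕ} (c : V → Option (Fin k)) (v : V) (a : Fin k) :
    V → Option (Fin k) :=
  Function.update c v (some a)

/-- Alice has a winning strategy in the (connected, if `conn`) coloring game with `k`
colors, starting from position `c`, with `n` moves remaining, where `aliceTurn` records
whose turn it is.  Alice wins exactly if all vertices eventually get colored. -/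
def AliceWinsFrom [DecidableEq V] (conn : Bool) (G : SimpleGraph V) (k : ℕ) :
    ℕ → Bool → (V → Option (Fin k)) → Prop
  | 0, _, c => ∀ v, (c v).isSome
  | n + 1, aliceTurn, c =>
    (∀ v, (c v).isSome) ∨
      (if aliceTurn then
        ∃ v a, LegalMove conn G c v a ∧ AliceWinsFrom conn G k n false (play c v a)
      else
        (∃ v a, LegalMove conn G c v a) ∧
          ∀ v a, LegalMove conn G c v a → AliceWinsFrom conn G k n true (play c v a))

/-- Bob has a winning strategy in the (connected, if `conn`) coloring game with `k`
colors, from position `c` with `n` moves remaining.  Bob wins exactly if the game ends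
(no legal move is available) while some vertex is still uncolored. -/
def BobWinsFrom [DecidableEq V] (conn : Bool) (G : SimpleGraph V) (k : ℕ) :
    ℕ → Bool → (V → Option (Fin k)) → Prop
  | 0, _, c => ∃ v, c v = none
  | n + 1, aliceTurn, c =>
    (∃ v, c v = none) ∧
      (if aliceTurn then
        ∀ v a, LegalMove conn G c v a → BobWinsFrom conn G k n false (play c v a)
      else
        (¬ ∃ v a, LegalMove conn G c v a) ∨
          ∃ v a, LegalMove conn G c v a ∧ BobWinsFrom conn G k n true (play c v a))

/-- Alice has a winning strategy in the (connected, if `conn`) coloring game on `G`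
with `k` colors (Alice moves first, starting from the all-uncolored position). -/
def AliceWinsColoringGame [Fintype V] [DecidableEq V] (conn : Bool) (G : SimpleGraph V)
    (k : ℕ) : Prop :=
  AliceWinsFrom conn G k (Fintype.card V) true fun _ => none

/-- Bob has a winning strategy in the (connected, if `conn`) coloring game on `G`
with `k` colors. -/
def BobWinsColoringGame [Fintype V] [DecidableEq V] (conn : Bool) (G : SimpleGraph V)
    (k : ℕ) : Prop :=
  BobWinsFrom conn G k (Fintype.card V) true fun _ => none

/-- The game chromatic number: the least `k` such that Alice wins the coloring game
on `G` with `k` colors. -/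
noncomputable def gameChromaticNumber [Fintype V] [DecidableEq V] (G : SimpleGraph V) : ℕ :=
  sInf {k | AliceWinsColoringGame false G k}

/-- The connected game chromatic number: the least `k` such that Alice wins the
connected coloring game on `G` with `k` colors. -/
noncomputable def connGameChromaticNumber [Fintype V] [DecidableEq V] (G : SimpleGraph V) : ℕ :=
  sInf {k | AliceWinsColoringGame true G k}

/-- A legal move in the marking game (connected version when `conn = true`):
mark an unmarked vertex, which (in the connected game) must have a marked neighbor
unless no vertex is marked yet. -/
def MarkLegal (conn : Bool) (G : SimpleGraph V) (M : Finset V) (v : V) : Prop :=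
  v ∉ M ∧ (conn = true → (M = ∅ ∨ ∃ u ∈ M, G.Adj u v))

/-- The marking-game objective for parameter `k`: every unmarked vertex has at most
`k - 1` marked neighbors. -/
def MarkGood (G : SimpleGraph V) (k : ℕ) (M : Finset V) : Prop :=
  ∀ v ∉ M, (M.filter fun u => G.Adj u v).card < k

/-- Alice has a strategy in the (connected, if `conn`) marking game, from position `M`
with `n` moves remaining, guaranteeing that at every moment every unmarked vertex has
at most `k - 1` marked neighbors. -/
def AliceWinsMarkingFrom [DecidableEq V] (conn : Bool) (G : SimpleGraph V) (k : ℕ) :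
    ℕ → Bool → Finset V → Prop
  | 0, _, M => MarkGood G k M
  | n + 1, aliceTurn, M =>
    MarkGood G k M ∧
      (if aliceTurn then
        ∃ v, MarkLegal conn G M v ∧ AliceWinsMarkingFrom conn G k n false (insert v M)
      else
        ∀ v, MarkLegal conn G M v → AliceWinsMarkingFrom conn G k n true (insert v M))

/-- Alice achieves the marking-game bound `k` on `G` (connected version if `conn`). -/
def AliceWinsMarkingGame [Fintype V] [DecidableEq V] (conn : Bool) (G : SimpleGraph V)
    (k : ℕ) : Prop :=
  AliceWinsMarkingFrom conn G k (Fintype.card V) true ∅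

/-- The game coloring number: the least `k` for which Alice has a strategy in the
marking game guaranteeing that every unmarked vertex always has at most `k - 1`
marked neighbors. -/
noncomputable def gameColoringNumber [Fintype V] [DecidableEq V] (G : SimpleGraph V) : ℕ :=
  sInf {k | AliceWinsMarkingGame false G k}

/-- The connected game coloring number. -/
noncomputable def connGameColoringNumber [Fintype V] [DecidableEq V] (G : SimpleGraph V) : ℕ :=
  sInf {k | AliceWinsMarkingGame true G k}

/-- `H` is a minor of `G`: there is a family of nonempty, pairwise disjoint,
connected branch sets in `G` indexed by the vertices of `H`, with an edge of `G`
between the branch sets of any two adjacent vertices of `H`. -/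
def IsMinorOf {W : Type*} (H : SimpleGraph W) (G : SimpleGraph V) : Prop :=
  ∃ f : W → Set V,
    (∀ w, (f w).Nonempty) ∧
    (∀ w, ((G.induce (f w)).Connected)) ∧
    (∀ w w', w ≠ w' → Disjoint (f w) (f w')) ∧
    (∀ w w', H.Adj w w' → ∃ u ∈ f w, ∃ v ∈ f w', G.Adj u v)

/-- A graph is outerplanar iff it contains neither `K₄` nor `K_{2,3}` as a minor. -/
def Outerplanar (G : SimpleGraph V) : Prop :=
  ¬ IsMinorOf (SimpleGraph.completeGraph (Fin 4)) G ∧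
  ¬ IsMinorOf (completeBipartiteGraph (Fin 2) (Fin 3)) G

end ConnGame

/-- The graph on vertices `v₀, …, v₅` with edge set
`{v₀v₁, v₀v₅, v₁v₂, v₁v₄, v₁v₅, v₂v₃, v₂v₄, v₃v₄, v₄v₅}`. -/
def paperGraph : SimpleGraph (Fin 6) :=
  SimpleGraph.fromRel (fun i j =>
    (i, j) ∈ ([(0, 1), (0, 5), (1, 2), (1, 4), (1, 5), (2, 3), (2, 4), (3, 4), (4, 5)] :
      List (Fin 6 × Fin 6)))

namespace ConnGame

variable {V : Type*} [DecidableEq V] {G : SimpleGraph V} {k : ℕ} {conn : Bool}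

def Blocked (G : SimpleGraph V) (c : V → Option (Fin k)) (v : V) : Prop :=
  c v = none ∧ ∀ a, ∃ u, G.Adj v u ∧ c u = some a

theorem Blocked.play {c : V → Option (Fin k)} {v w : V} {a : Fin k} (hv : Blocked G c v)
    (hw : ProperMove G c w a) : Blocked G (play c w a) v := by
  obtain ⟨hcv, hcolors⟩ := hv
  have hwv : w ≠ v := by
    rintro rfl
    obtain ⟨u, hadj, hu⟩ := hcolors a
    exact hw.2 u hadj hu
  refine ⟨by simp [ConnGame.play, hwv.symm, hcv], fun b => ?_⟩
  obtain ⟨u, hadj, hu⟩ := hcolors b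
  have huw : u ≠ w := by
    rintro rfl
    simp [hw.1] at hu
  exact ⟨u, hadj, by simp [ConnGame.play, huw, hu]⟩

theorem bobWinsFrom_of_blocked {c : V → Option (Fin k)} {v : V} (hv : Blocked G c v)
    (n : ℕ) (t : Bool) : BobWinsFrom conn G k n t c := by
  induction n generalizing c t with
  | zero => exact ⟨v, hv.1⟩
  | succ n ih =>
    refine ⟨⟨v, hv.1⟩, ?_⟩
    cases t with
    | true => exact fun w a hwa => ih (hv.play hwa.1) false
    | false =>
      by_cases hmove : ∃ w a, LegalMove conn G c w a
      · obtain ⟨w, a, hwa⟩ := hmove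
        exact Or.inr ⟨w, a, hwa, ih (hv.play hwa.1) true⟩
      · exact Or.inl hmove

def BobForcesBlock (conn : Bool) (G : SimpleGraph V) (k : ℕ) :
    ℕ → Bool → (V → Option (Fin k)) → Prop
  | 0, _, c => ∃ v, Blocked G c v
  | n + 1, aliceTurn, c =>
    (∃ v, Blocked G c v) ∨
      (∃ v, c v = none) ∧
        (if aliceTurn then
          ∀ v a, LegalMove conn G c v a → BobForcesBlock conn G k n false (play c v a)
        else
          ∃ v a, LegalMove conn G c v a ∧ BobForcesBlock conn G k n true (play c v a))

theorem BobForcesBlock.bobWinsFrom {n m : ℕ} {t : Bool} {c : V → Option (Fin k)}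
    (h : BobForcesBlock conn G k n t c) (hnm : n ≤ m) : BobWinsFrom conn G k m t c := by
  induction n generalizing m t c with
  | zero =>
    obtain ⟨v, hv⟩ := h
    exact bobWinsFrom_of_blocked hv m t
  | succ n ih =>
    obtain ⟨v, hv⟩ | ⟨huncolored, hplay⟩ := h
    · exact bobWinsFrom_of_blocked hv m t
    obtain ⟨m, rfl⟩ : ∃ m', m = m' + 1 := ⟨m - 1, by omega⟩
    have hnm : n ≤ m := by omega
    refine ⟨huncolored, ?_⟩
    cases t with
    | true => exact fun w a hwa => ih (hplay w a hwa) hnm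
    | false =>
      obtain ⟨w, a, hwa, hwin⟩ := hplay
      exact Or.inr ⟨w, a, hwa, ih hwin hnm⟩

section Decidable

variable [Fintype V] [DecidableRel G.Adj]

instance (c : V → Option (Fin k)) (v : V) : Decidable (Blocked G c v) :=
  inferInstanceAs (Decidable (_ ∧ _))

instance (c : V → Option (Fin k)) (v : V) (a : Fin k) : Decidable (LegalMove conn G c v a) :=
  inferInstanceAs (Decidable ((_ ∧ _) ∧ (_ → (_ ∨ _))))

instance decidableBobForcesBlock :
    ∀ n t (c : V → Option (Fin k)), Decidable (BobForcesBlock conn G k n t c)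
  | 0, _, _ => inferInstanceAs (Decidable (∃ _, _))
  | n + 1, _, _ =>
    have := decidableBobForcesBlock n
    inferInstanceAs (Decidable (_ ∨ _))

end Decidable

end ConnGame

instance : DecidableRel paperGraph.Adj :=
  inferInstanceAs (DecidableRel (SimpleGraph.fromRel _).Adj)

theorem paperGraph_bobForcesBlock :
    ConnGame.BobForcesBlock true paperGraph 3 4 true fun _ => none := by
  decide

/-- Bob has a winning strategy in the connected coloring game on the
graph above with 3 colors. -/
theorem bobWins_paperGraph_three :
    ConnGame.BobWinsColoringGame true paperGraph 3 :=
  paperGraph_bobForcesBlock.bobWinsFrom (by simp)
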